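/- (Theorem 1, cross-entropy risk form.) Let 𝒳, 𝒴, 𝒵 be finite nonempty sets, let μ_1, …, μ_M (M ≥ 1) be probability measures on 𝒳 × 𝒴, let f : 𝒳 → 𝒵, and for each i let ν_i be the pushforward of μ_i under the map (x, y) ↦ (f(x), y). Suppose ν_1 = ν_2 = ⋯ = ν_M (domain invariance of the features). Then the infimum over a single stochastic classifier g : 𝒵 → Δ(𝒴) of Σ_{i=1}^M Σ_{(z,y)} ν_i({(z,y)}) · (−log g(z)(y)), minus Σ_{i=1}^M of the infimum over stochastic classifiers h_i : 𝒳 → Δ(𝒴) of Σ_{(x,y)} μ_i({(x,y)}) · (−log h_i(x)(y)), is at least Δ_p = Σ_{i=1}^M ( I_{μ_i}(X; Y) − min_{1≤j≤M} I_{μ_j}(X; Y) ). Equivalently, Σ_{i=1}^M H_{ν_i}(Y | Z) − Σ_{i=1}^M H_{μ_i}(Y | X) ≥ Δ_p. -/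

import Mathlib

open scoped ENNReal

/-- A probability mass function on a finite type, given as a real-valued function. -/
def IsPMF {α : Type*} [Fintype α] (p : α → ℝ) : Prop :=
  (∀ a, 0 ≤ p a) ∧ ∑ a, p a = 1

/-- First marginal of a joint distribution on `X × Y`. -/
noncomputable def marg1 {X Y : Type*} [Fintype Y] (μ : X × Y → ℝ) (x : X) : ℝ :=
  ∑ y, μ (x, y)

/-- Second marginal of a joint distribution on `X × Y`. -/
noncomputable def marg2 {X Y : Type*} [Fintype X] (μ : X × Y → ℝ) (y : Y) : ℝ :=
  ∑ x, μ (x, y)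

/-- Mutual information `I_μ(X; Y)` of a joint distribution `μ` on `X × Y`;
terms with `μ p = 0` vanish since `0 * log _ = 0` (and `Real.log 0 = 0`). -/
noncomputable def mutualInfo {X Y : Type*} [Fintype X] [Fintype Y] (μ : X × Y → ℝ) : ℝ :=
  ∑ p : X × Y, μ p * Real.log (μ p / (marg1 μ p.1 * marg2 μ p.2))

/-- Entropy `H_μ(Y)` of the second marginal (with the convention `0 * log 0 = 0`). -/
noncomputable def entropy2 {X Y : Type*} [Fintype X] [Fintype Y] (μ : X × Y → ℝ) : ℝ :=
  -∑ y, marg2 μ y * Real.log (marg2 μ y)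

/-- Conditional entropy `H_μ(Y | X) = H_μ(Y) - I_μ(X; Y)`. -/
noncomputable def condEntropy2 {X Y : Type*} [Fintype X] [Fintype Y] (μ : X × Y → ℝ) : ℝ :=
  entropy2 μ - mutualInfo μ

/-- `-log t`, valued in `[0, ∞]`, with `-log 0 = ∞`. -/
noncomputable def negLog (t : ℝ) : ℝ≥0∞ :=
  if t = 0 then ⊤ else ENNReal.ofReal (-Real.log t)

/-- Expected cross-entropy risk of a stochastic classifier `g : X → Δ(Y)` under a
joint distribution `μ` on `X × Y`, valued in `[0, ∞]`. -/
noncomputable def ceRisk {X Y : Type*} [Fintype X] [Fintype Y]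
    (μ : X × Y → ℝ) (g : X → Y → ℝ) : ℝ≥0∞ :=
  ∑ p : X × Y, ENNReal.ofReal (μ p) * negLog (g p.1 p.2)

/-- Pushforward of a joint distribution `μ` on `X × Y` under `(x, y) ↦ (f x, y)`:
the joint law of `(f(X), Y)`. -/
noncomputable def push {X Y Z : Type*} [Fintype X] [DecidableEq Z]
    (f : X → Z) (μ : X × Y → ℝ) : Z × Y → ℝ :=
  fun p => ∑ x ∈ Finset.univ.filter (fun x => f x = p.1), μ (x, p.2)

/-!
The conditional law of `Y` given `X` is a classifier whose cross-entropy risk is `H(Y | X)`, and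
Gibbs' inequality shows that no classifier does better, so every infimum in the statement is a
conditional entropy. Composing the conditional law of `Y` given `Z = f(X)` with `f` gives a
classifier on `X`, whence the data-processing inequality `I(f(X); Y) ≤ I(X; Y)`. As `H(Y)` is
unchanged by the pushforward and all `ν_i` coincide,
`H_{ν_i}(Y | Z) - H_{μ_i}(Y | X) = I_{μ_i}(X; Y) - I_{ν_j}(Z; Y) ≥ I_{μ_i}(X; Y) - I_{μ_j}(X; Y)`
for every `j`.
-/

lemma Real.sub_le_mul_log_div {a c : ℝ} (ha : 0 < a) (hc : 0 < c) :
    a - c ≤ a * Real.log (a / c) := by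
  have h := Real.one_sub_inv_le_log_of_pos (div_pos ha hc)
  calc a - c = a * (1 - (a / c)⁻¹) := by field_simp
    _ ≤ a * Real.log (a / c) := mul_le_mul_of_nonneg_left h ha.le

lemma ofReal_mul_negLog {a t : ℝ} (ha : 0 ≤ a) (ht : a ≠ 0 → t ≠ 0) :
    ENNReal.ofReal a * negLog t = ENNReal.ofReal (a * -Real.log t) := by
  rcases ha.eq_or_lt with rfl | ha
  · simp
  · rw [negLog, if_neg (ht ha.ne'), ENNReal.ofReal_mul ha.le]

section Conditional

variable {X Y : Type*} [Fintype Y] {μ : X × Y → ℝ}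

lemma marg1_nonneg (hμ : ∀ p, 0 ≤ μ p) (x : X) : 0 ≤ marg1 μ x :=
  Finset.sum_nonneg fun _ _ => hμ _

lemma le_marg1 (hμ : ∀ p, 0 ≤ μ p) (p : X × Y) : μ p ≤ marg1 μ p.1 :=
  Finset.single_le_sum (f := fun y => μ (p.1, y)) (fun _ _ => hμ _) (Finset.mem_univ p.2)

lemma marg1_pos (hμ : ∀ p, 0 ≤ μ p) {p : X × Y} (hp : μ p ≠ 0) : 0 < marg1 μ p.1 :=
  ((hμ p).lt_of_ne' hp).trans_le (le_marg1 hμ p)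

lemma mul_neg_log_div_marg1_nonneg (hμ : ∀ p, 0 ≤ μ p) (p : X × Y) :
    0 ≤ μ p * -Real.log (μ p / marg1 μ p.1) := by
  refine mul_nonneg (hμ p) (neg_nonneg.2 (Real.log_nonpos (div_nonneg (hμ p) ?_) ?_))
  · exact marg1_nonneg hμ p.1
  · exact div_le_one_of_le₀ (le_marg1 hμ p) (marg1_nonneg hμ p.1)

/-- The conditional law of `Y` given `X`, made uniform on the null fibres of the first marginal. -/
noncomputable def condK [Nonempty Y] (μ : X × Y → ℝ) (x : X) (y : Y) : ℝ :=
  if marg1 μ x = 0 then (Fintype.card Y : ℝ)⁻¹ else μ (x, y) / marg1 μ x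

lemma isPMF_condK [Nonempty Y] (hμ : ∀ p, 0 ≤ μ p) (x : X) : IsPMF (condK μ x) := by
  by_cases hx : marg1 μ x = 0
  · simp only [IsPMF, condK, if_pos hx, Finset.sum_const, Finset.card_univ, nsmul_eq_mul]
    exact ⟨fun _ => by positivity, mul_inv_cancel₀ (Nat.cast_ne_zero.2 Fintype.card_ne_zero)⟩
  · simp only [IsPMF, condK, if_neg hx, ← Finset.sum_div]
    exact ⟨fun y => div_nonneg (hμ _) (marg1_nonneg hμ x), div_self hx⟩

end Conditional

lemma le_marg2 {X Y : Type*} [Fintype X] {μ : X × Y → ℝ} (hμ : ∀ p, 0 ≤ μ p) (p : X × Y) :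
    μ p ≤ marg2 μ p.2 :=
  Finset.single_le_sum (f := fun x => μ (x, p.2)) (fun _ _ => hμ _) (Finset.mem_univ p.1)

section Entropy

variable {X Y : Type*} [Fintype X] [Fintype Y] {μ : X × Y → ℝ}

lemma entropy2_eq_sum :
    entropy2 μ = -∑ p, μ p * Real.log (marg2 μ p.2) := by
  simp only [entropy2, marg2, Finset.sum_mul, Fintype.sum_prod_type]
  rw [Finset.sum_comm]

lemma condEntropy2_eq_sum (hμ : ∀ p, 0 ≤ μ p) :
    condEntropy2 μ = ∑ p, μ p * -Real.log (μ p / marg1 μ p.1) := by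
  rw [condEntropy2, entropy2_eq_sum, mutualInfo, ← neg_add', ← Finset.sum_add_distrib,
    ← Finset.sum_neg_distrib]
  refine Finset.sum_congr rfl fun p _ => ?_
  by_cases hp : μ p = 0
  · simp [hp]
  have h1 := marg1_pos hμ hp
  have h2 : 0 < marg2 μ p.2 := ((hμ p).lt_of_ne' hp).trans_le (le_marg2 hμ p)
  rw [Real.log_div hp (by positivity), Real.log_mul h1.ne' h2.ne', Real.log_div hp h1.ne']
  ring

lemma condEntropy2_nonneg (hμ : ∀ p, 0 ≤ μ p) : 0 ≤ condEntropy2 μ := by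
  rw [condEntropy2_eq_sum hμ]
  exact Finset.sum_nonneg fun p _ => mul_neg_log_div_marg1_nonneg hμ p

/-- Gibbs' inequality. -/
lemma condEntropy2_le_sum_mul_neg_log (hμ : ∀ p, 0 ≤ μ p) {h : X → Y → ℝ}
    (hh : ∀ x, IsPMF (h x)) (hsupp : ∀ p : X × Y, μ p ≠ 0 → h p.1 p.2 ≠ 0) :
    condEntropy2 μ ≤ ∑ p, μ p * -Real.log (h p.1 p.2) := by
  have hterm : ∀ p : X × Y, μ p - h p.1 p.2 * marg1 μ p.1
      ≤ μ p * -Real.log (h p.1 p.2) - μ p * -Real.log (μ p / marg1 μ p.1) := by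
    intro p
    by_cases hp : μ p = 0
    · simpa [hp] using mul_nonneg ((hh p.1).1 p.2) (marg1_nonneg hμ p.1)
    have h1 := marg1_pos hμ hp
    have hpos : 0 < h p.1 p.2 := ((hh p.1).1 p.2).lt_of_ne' (hsupp p hp)
    have key := Real.sub_le_mul_log_div ((hμ p).lt_of_ne' hp) (mul_pos h1 hpos)
    rw [← div_div, Real.log_div (div_ne_zero hp h1.ne') hpos.ne'] at key
    linear_combination key
  have htotal : ∑ p : X × Y, h p.1 p.2 * marg1 μ p.1 = ∑ p, μ p := by
    simp only [Fintype.sum_prod_type, ← Finset.sum_mul, (hh _).2, one_mul]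
    rfl
  rw [condEntropy2_eq_sum hμ, ← sub_nonneg]
  calc (0 : ℝ) = ∑ p : X × Y, (μ p - h p.1 p.2 * marg1 μ p.1) := by
        rw [Finset.sum_sub_distrib, htotal, sub_self]
    _ ≤ _ := Finset.sum_le_sum fun p _ => hterm p
    _ = _ := Finset.sum_sub_distrib ..

lemma ceRisk_eq_top {h : X → Y → ℝ} {p : X × Y} (hp : 0 < μ p) (hh : h p.1 p.2 = 0) :
    ceRisk μ h = ⊤ :=
  ENNReal.sum_eq_top.2 ⟨p, Finset.mem_univ p, by
    rw [negLog, if_pos hh, ENNReal.mul_top (ENNReal.ofReal_pos.2 hp).ne']⟩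

lemma ofReal_condEntropy2_le_ceRisk (hμ : ∀ p, 0 ≤ μ p) {h : X → Y → ℝ}
    (hh : ∀ x, IsPMF (h x)) : ENNReal.ofReal (condEntropy2 μ) ≤ ceRisk μ h := by
  by_cases hsupp : ∀ p : X × Y, μ p ≠ 0 → h p.1 p.2 ≠ 0
  · calc ENNReal.ofReal (condEntropy2 μ)
          ≤ ENNReal.ofReal (∑ p, μ p * -Real.log (h p.1 p.2)) :=
            ENNReal.ofReal_le_ofReal (condEntropy2_le_sum_mul_neg_log hμ hh hsupp)
      _ ≤ ∑ p, ENNReal.ofReal (μ p * -Real.log (h p.1 p.2)) :=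
            Finset.le_sum_of_subadditive _ ENNReal.ofReal_zero.le
              (fun _ _ => ENNReal.ofReal_add_le) _ _
      _ = ceRisk μ h :=
            Finset.sum_congr rfl fun p _ => (ofReal_mul_negLog (hμ p) (hsupp p)).symm
  · push Not at hsupp
    obtain ⟨p, hp, hhp⟩ := hsupp
    rw [ceRisk_eq_top ((hμ p).lt_of_ne' hp) hhp]
    exact le_top

lemma ceRisk_condK [Nonempty Y] (hμ : ∀ p, 0 ≤ μ p) :
    ceRisk μ (condK μ) = ENNReal.ofReal (condEntropy2 μ) := by
  rw [condEntropy2_eq_sum hμ, ceRisk,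
    ENNReal.ofReal_sum_of_nonneg fun p _ => mul_neg_log_div_marg1_nonneg hμ p]
  refine Finset.sum_congr rfl fun p _ => ?_
  by_cases hp : μ p = 0
  · simp [hp]
  have h1 := marg1_pos hμ hp
  rw [condK, if_neg h1.ne', ofReal_mul_negLog (hμ p) fun _ => div_ne_zero hp h1.ne']

lemma iInf_ceRisk [Nonempty Y] (hμ : ∀ p, 0 ≤ μ p) :
    ⨅ h : {h : X → Y → ℝ // ∀ x, IsPMF (h x)}, ceRisk μ h.1
      = ENNReal.ofReal (condEntropy2 μ) :=
  le_antisymm (iInf_le_of_le ⟨condK μ, isPMF_condK hμ⟩ (ceRisk_condK hμ).le)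
    (le_iInf fun h => ofReal_condEntropy2_le_ceRisk hμ h.2)

lemma iInf_sum_ceRisk_of_forall_eq [Nonempty Y] {ι : Type*} [Fintype ι] {ν : ι → X × Y → ℝ}
    (hμ : ∀ p, 0 ≤ μ p) (hν : ∀ i, ν i = μ) :
    ⨅ h : {h : X → Y → ℝ // ∀ x, IsPMF (h x)}, ∑ i, ceRisk (ν i) h.1
      = ∑ i, ENNReal.ofReal (condEntropy2 (ν i)) := by
  simp only [hν]
  exact le_antisymm
    (iInf_le_of_le ⟨condK μ, isPMF_condK hμ⟩ (by rw [ceRisk_condK hμ]))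
    (le_iInf fun h => Finset.sum_le_sum fun _ _ => ofReal_condEntropy2_le_ceRisk hμ h.2)

end Entropy

lemma push_nonneg {X Y Z : Type*} [Fintype X] [DecidableEq Z] {μ : X × Y → ℝ}
    (hμ : ∀ p, 0 ≤ μ p) (f : X → Z) (q : Z × Y) : 0 ≤ push f μ q :=
  Finset.sum_nonneg fun _ _ => hμ _

lemma marg2_push {X Y Z : Type*} [Fintype X] [Fintype Z] [DecidableEq Z] (f : X → Z)
    (μ : X × Y → ℝ) : marg2 (push f μ) = marg2 μ :=
  funext fun y =>
    Finset.sum_fiberwise_of_maps_to (fun x _ => Finset.mem_univ (f x)) (fun x => μ (x, y))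

section Push

variable {X Y Z : Type*} [Fintype X] [Fintype Y] [Fintype Z] [DecidableEq Z]

lemma entropy2_push (f : X → Z) (μ : X × Y → ℝ) : entropy2 (push f μ) = entropy2 μ := by
  rw [entropy2, entropy2, marg2_push]

lemma ceRisk_comp {μ : X × Y → ℝ} (hμ : ∀ p, 0 ≤ μ p) (f : X → Z) (g : Z → Y → ℝ) :
    ceRisk μ (fun x => g (f x)) = ceRisk (push f μ) g := by
  simp only [ceRisk, push, Fintype.sum_prod_type]
  rw [Finset.sum_comm (γ := X), Finset.sum_comm (γ := Z)]
  refine Finset.sum_congr rfl fun y _ => ?_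
  rw [← Finset.sum_fiberwise_of_maps_to (g := f) fun x _ => Finset.mem_univ (f x)]
  refine Finset.sum_congr rfl fun z _ => ?_
  rw [ENNReal.ofReal_sum_of_nonneg fun x _ => hμ _, Finset.sum_mul]
  exact Finset.sum_congr rfl fun x hx => by rw [(Finset.mem_filter.1 hx).2]

lemma condEntropy2_le_condEntropy2_push [Nonempty Y] {μ : X × Y → ℝ} (hμ : ∀ p, 0 ≤ μ p)
    (f : X → Z) : condEntropy2 μ ≤ condEntropy2 (push f μ) := by
  have hν := push_nonneg hμ f
  refine (ENNReal.ofReal_le_ofReal_iff (condEntropy2_nonneg hν)).1 ?_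
  calc ENNReal.ofReal (condEntropy2 μ)
      ≤ ceRisk μ (fun x => condK (push f μ) (f x)) :=
        ofReal_condEntropy2_le_ceRisk hμ fun x => isPMF_condK hν (f x)
    _ = ceRisk (push f μ) (condK (push f μ)) := ceRisk_comp hμ f _
    _ = ENNReal.ofReal (condEntropy2 (push f μ)) := ceRisk_condK hν

lemma condEntropy2_push_sub (f : X → Z) (μ : X × Y → ℝ) :
    condEntropy2 (push f μ) - condEntropy2 μ = mutualInfo μ - mutualInfo (push f μ) := by
  rw [condEntropy2, condEntropy2, entropy2_push]
  ring

lemma mutualInfo_push_le [Nonempty Y] {μ : X × Y → ℝ} (hμ : ∀ p, 0 ≤ μ p) (f : X → Z) :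
    mutualInfo (push f μ) ≤ mutualInfo μ := by
  linarith [condEntropy2_le_condEntropy2_push hμ f, condEntropy2_push_sub f μ]

end Push

theorem theorem1_crossEntropy_form_general
    {X Y Z : Type*} [Fintype X] [Fintype Y] [Fintype Z]
    [Nonempty Y] [DecidableEq Z]
    (M : ℕ) (hM : 1 ≤ M) (μ : Fin M → X × Y → ℝ) (hμ : ∀ i, IsPMF (μ i))
    (f : X → Z) (hinv : ∀ i j, push f (μ i) = push f (μ j)) :
    ENNReal.ofReal
        (∑ i, (mutualInfo (μ i)
          - Finset.univ.inf' ⟨⟨0, hM⟩, Finset.mem_univ _⟩ (fun j => mutualInfo (μ j))))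
      ≤ (⨅ g : {g : Z → Y → ℝ // ∀ z, IsPMF (g z)}, ∑ i, ceRisk (push f (μ i)) g.1)
        - ∑ i, ⨅ h : {h : X → Y → ℝ // ∀ x, IsPMF (h x)}, ceRisk (μ i) h.1
    ∧ ∑ i, (mutualInfo (μ i)
          - Finset.univ.inf' ⟨⟨0, hM⟩, Finset.mem_univ _⟩ (fun j => mutualInfo (μ j)))
      ≤ ∑ i, condEntropy2 (push f (μ i)) - ∑ i, condEntropy2 (μ i) := by
  have hnonneg i : ∀ p, 0 ≤ μ i p := (hμ i).1
  have hgap : ∑ i, (mutualInfo (μ i)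
        - Finset.univ.inf' ⟨⟨0, hM⟩, Finset.mem_univ _⟩ (fun j => mutualInfo (μ j)))
      ≤ ∑ i, condEntropy2 (push f (μ i)) - ∑ i, condEntropy2 (μ i) := by
    rw [← Finset.sum_sub_distrib]
    refine Finset.sum_le_sum fun i _ => ?_
    have hinf : mutualInfo (push f (μ i))
        ≤ Finset.univ.inf' ⟨⟨0, hM⟩, Finset.mem_univ _⟩ fun j => mutualInfo (μ j) :=
      Finset.le_inf' _ _ fun j _ => hinv i j ▸ mutualInfo_push_le (hnonneg j) f
    linarith [condEntropy2_push_sub f (μ i)]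
  refine ⟨?_, hgap⟩
  rw [iInf_sum_ceRisk_of_forall_eq (push_nonneg (hnonneg ⟨0, hM⟩) f) fun i => hinv i ⟨0, hM⟩,
    Finset.sum_congr rfl fun i _ => iInf_ceRisk (hnonneg i),
    ← ENNReal.ofReal_sum_of_nonneg fun i _ => condEntropy2_nonneg (push_nonneg (hnonneg i) f),
    ← ENNReal.ofReal_sum_of_nonneg fun i _ => condEntropy2_nonneg (hnonneg i),
    ← ENNReal.ofReal_sub _ (Finset.sum_nonneg fun i _ => condEntropy2_nonneg (hnonneg i))]
  exact ENNReal.ofReal_le_ofReal hgap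

/-- Theorem 1, cross-entropy risk form: under domain invariance of the features
(`ν_1 = ⋯ = ν_M` with `ν_i` the law of `(f(X_i), Y)`), the optimal total source
cross-entropy risk achievable with a single stochastic classifier on the features
exceeds the sum of the per-domain optimal risks on the raw inputs by at least the
information gap `Δ_p`; equivalently,
`∑ i, H_{ν_i}(Y | Z) - ∑ i, H_{μ_i}(Y | X) ≥ Δ_p`. -/
theorem theorem1_crossEntropy_form
    {X Y Z : Type*} [Fintype X] [Fintype Y] [Fintype Z]
    [Nonempty X] [Nonempty Y] [Nonempty Z] [DecidableEq Z]
    (M : ℕ) (hM : 1 ≤ M) (μ : Fin M → X × Y → ℝ) (hμ : ∀ i, IsPMF (μ i))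
    (f : X → Z) (hinv : ∀ i j, push f (μ i) = push f (μ j)) :
    ENNReal.ofReal
        (∑ i, (mutualInfo (μ i)
          - Finset.univ.inf' ⟨⟨0, hM⟩, Finset.mem_univ _⟩ (fun j => mutualInfo (μ j))))
      ≤ (⨅ g : {g : Z → Y → ℝ // ∀ z, IsPMF (g z)}, ∑ i, ceRisk (push f (μ i)) g.1)
        - ∑ i, ⨅ h : {h : X → Y → ℝ // ∀ x, IsPMF (h x)}, ceRisk (μ i) h.1
    ∧ ∑ i, (mutualInfo (μ i)
          - Finset.univ.inf' ⟨⟨0, hM⟩, Finset.mem_univ _⟩ (fun j => mutualInfo (μ j)))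
      ≤ ∑ i, condEntropy2 (push f (μ i)) - ∑ i, condEntropy2 (μ i) :=
  theorem1_crossEntropy_form_general M hM μ hμ f hinv
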